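/- arXiv:math/0606614 — 2 statements merged into one kernel-verified Lean document; each statement's English description precedes it below -/
import Mathlib

section
/- Let K be a division ring, S an endomorphism, D an S-derivation, a ∈ K, and f ∈ K[t;S,D] a nonzero polynomial. Then the kernel of f(Tₐ), namely E(f,a) = {x ∈ K \ {0} : f(a^x) = 0} ∪ {0}, is a right vector space over the (S,D)-centralizer C(a) of dimension at most deg(f). -/
/-- The `(S,D)`-conjugate `a^c := S(c)·a·c⁻¹ + D(c)·c⁻¹`. -/
def sdConj {K : Type*} [DivisionRing K] (S : K →+* K) (D : K →+ K) (a c : K) : K :=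
  S c * a * c⁻¹ + D c * c⁻¹

/-- The `(S,D)`-centralizer of `a`. -/
def sdCentralizer {K : Type*} [DivisionRing K] (S : K →+* K) (D : K →+ K) (a : K) : Set K :=
  {x | x = 0 ∨ S x * a * x⁻¹ + D x * x⁻¹ = a}

/-- `Nᵢ(x)`, so that right evaluation of `f = Σ aᵢtⁱ` at `x` is `f(x) = Σ aᵢ Nᵢ(x)`. -/
def sdN {K : Type*} [DivisionRing K] (S : K →+* K) (D : K →+ K) (x : K) : ℕ → K
  | 0 => 1
  | i + 1 => S (sdN S D x i) * x + D (sdN S D x i)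

/-- `E(f,a) = {x ≠ 0 : f(a^x) = 0} ∪ {0}`, the kernel of `f(Tₐ)`,
for `f` given by its coefficient function. -/
def sdE {K : Type*} [DivisionRing K] (S : K →+* K) (D : K →+ K) (f : ℕ →₀ K) (a : K) :
    Set K :=
  {x | x = 0 ∨ (f.sum fun i k => k * sdN S D (sdConj S D a x) i) = 0}

section
variable {K : Type*} [DivisionRing K] (S : K →+* K) (D : K →+ K) (a : K)

/-- The basic operator `Tₐ x = S(x)a + D(x)`. -/
def sdT (x : K) : K := S x * a + D x

lemma sdT_zero : sdT S D a 0 = 0 := by simp [sdT]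

lemma sdT_iter_zero (i : ℕ) : (sdT S D a)^[i] 0 = 0 :=
  Function.iterate_fixed (sdT_zero S D a) i

lemma sdT_add (x y : K) : sdT S D a (x + y) = sdT S D a x + sdT S D a y := by
  simp [sdT, add_mul]; abel

lemma sdT_iter_add (m : ℕ) (x y : K) :
    (sdT S D a)^[m] (x + y) = (sdT S D a)^[m] x + (sdT S D a)^[m] y := by
  induction m with
  | zero => rfl
  | succ m ih => rw [Function.iterate_succ_apply', Function.iterate_succ_apply',
      Function.iterate_succ_apply', ih, sdT_add]

variable (hD : ∀ a b : K, D (a * b) = S a * D b + D a * b)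

include hD in
lemma sdD_one : D 1 = 0 := by
  have := hD 1 1
  simp at this
  linear_combination (norm := abel) this

include hD in
lemma sdT_mulleft (c y : K) : sdT S D a (c * y) = S c * sdT S D a y + D c * y := by
  simp only [sdT, map_mul, hD, mul_add, mul_assoc, add_assoc]

include hD in
lemma sdT_mulright {c : K} (hc : S c * a + D c = a * c) (y : K) :
    sdT S D a (y * c) = sdT S D a y * c := by
  have h1 : sdT S D a c = a * c := by rw [sdT]; exact hc
  rw [sdT_mulleft S D a hD, h1, sdT, add_mul, mul_assoc]

include hD in
lemma sdT_iter_mulright {c : K} (hc : S c * a + D c = a * c) (m : ℕ) (y : K) :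
    (sdT S D a)^[m] (y * c) = (sdT S D a)^[m] y * c := by
  induction m with
  | zero => rfl
  | succ m ih => rw [Function.iterate_succ_apply', Function.iterate_succ_apply', ih,
      sdT_mulright S D a hD hc]

lemma sdCent_iff (c : K) : c ∈ sdCentralizer S D a ↔ S c * a + D c = a * c := by
  constructor
  · rintro (rfl | h)
    · simp
    · by_cases hc : c = 0
      · simp [hc]
      · have := congrArg (· * c) h
        simpa [add_mul, mul_assoc, inv_mul_cancel₀ hc] using this
  · intro h
    by_cases hc : c = 0
    · exact Or.inl hc
    · right
      have h2 : (S c * a + D c) * c⁻¹ = a * c * c⁻¹ := by rw [h]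
      rw [add_mul] at h2
      rwa [mul_assoc a, mul_inv_cancel₀ hc, mul_one] at h2


include hD in
lemma sdN_mul {x : K} (hx : x ≠ 0) (i : ℕ) :
    sdN S D (sdConj S D a x) i * x = (sdT S D a)^[i] x := by
  induction i with
  | zero => simp [sdN]
  | succ i ih =>
    have hconj : sdConj S D a x * x = sdT S D a x := by
      rw [sdConj, sdT, add_mul, mul_assoc (S x * a), mul_assoc (D x), inv_mul_cancel₀ hx,
        mul_one, mul_one]
    rw [Function.iterate_succ_apply', ← ih, sdT_mulleft S D a hD, sdN, add_mul,
      mul_assoc, hconj]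

/-- The operator `f(Tₐ)` applied to `x`. -/
def sdL (f : ℕ →₀ K) (x : K) : K := f.sum fun i k => k * (sdT S D a)^[i] x

lemma sdL_zero_right (f : ℕ →₀ K) : sdL S D a f 0 = 0 := by
  rw [sdL, Finsupp.sum]
  exact Finset.sum_eq_zero fun i _ => by rw [sdT_iter_zero, mul_zero]

lemma sdL_add (f : ℕ →₀ K) (x y : K) :
    sdL S D a f (x + y) = sdL S D a f x + sdL S D a f y := by
  rw [sdL, sdL, sdL, ← Finsupp.sum_add]
  exact Finsupp.sum_congr fun i _ => by rw [sdT_iter_add, mul_add]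

include hD in
lemma sdL_mulright (f : ℕ →₀ K) {c : K} (hc : S c * a + D c = a * c) (x : K) :
    sdL S D a f (x * c) = sdL S D a f x * c := by
  rw [sdL, sdL, Finsupp.sum_mul]
  exact Finsupp.sum_congr fun i _ => by rw [sdT_iter_mulright S D a hD hc, mul_assoc]

include hD in
lemma mem_sdE_iff (f : ℕ →₀ K) (x : K) :
    x ∈ sdE S D f a ↔ sdL S D a f x = 0 := by
  by_cases hx : x = 0
  · subst hx
    simp [sdE, sdL_zero_right]
  · have key : (f.sum fun i k => k * sdN S D (sdConj S D a x) i) * x = sdL S D a f x := by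
      rw [sdL, Finsupp.sum_mul]
      exact Finsupp.sum_congr fun i _ => by rw [mul_assoc, sdN_mul S D a hD hx]
    constructor
    · rintro (rfl | h)
      · exact absurd rfl hx
      · rw [← key, h, zero_mul]
    · intro h
      right
      rcases mul_eq_zero.mp (key.trans h) with h' | h'
      · exact h'
      · exact absurd h' hx

/-- Coefficients expressing `Tⁱ(b·x)` as a polynomial in `T` applied to `x`. -/
def sdBeta (b : K) : ℕ → ℕ → K
  | 0 => fun k => if k = 0 then b else 0
  | j + 1 => fun k =>
    match k with
    | 0 => D (sdBeta b j 0)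
    | m + 1 => S (sdBeta b j m) + D (sdBeta b j (m + 1))

lemma sdBeta_eq_zero (b : K) : ∀ j k, j < k → sdBeta S D b j k = 0 := by
  intro j
  induction j with
  | zero =>
    intro k hk
    have hk' : k ≠ 0 := by omega
    simp [sdBeta, hk']
  | succ j ih =>
    intro k hk
    match k, hk with
    | m + 1, hk =>
      have h1 : j < m := Nat.succ_lt_succ_iff.mp hk
      show S (sdBeta S D b j m) + D (sdBeta S D b j (m+1)) = 0
      rw [ih m h1, ih (m+1) (h1.trans (Nat.lt_succ_self m)), map_zero, map_zero, add_zero]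

include hD in
lemma sdBeta_spec (b : K) : ∀ (j : ℕ) (x : K),
    (sdT S D a)^[j] (b * x) = ∑ k ∈ Finset.range (j + 1), sdBeta S D b j k * (sdT S D a)^[k] x := by
  intro j
  induction j with
  | zero => intro x; simp [sdBeta]
  | succ j ih =>
    intro x
    have hadd : ∀ (s : Finset ℕ) (F : ℕ → K),
        sdT S D a (∑ k ∈ s, F k) = ∑ k ∈ s, sdT S D a (F k) :=
      fun s F => map_sum (AddMonoidHom.mk' (sdT S D a) (sdT_add S D a)) F s
    rw [Function.iterate_succ_apply', ih, hadd]
    have hterm : ∀ k, sdT S D a (sdBeta S D b j k * (sdT S D a)^[k] x)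
        = S (sdBeta S D b j k) * (sdT S D a)^[k+1] x + D (sdBeta S D b j k) * (sdT S D a)^[k] x := by
      intro k
      rw [sdT_mulleft S D a hD, Function.iterate_succ_apply']
    simp only [hterm]
    rw [Finset.sum_add_distrib]
    -- RHS: peel off k = 0
    rw [Finset.sum_range_succ' (fun k => sdBeta S D b (j+1) k * (sdT S D a)^[k] x)]
    have hb0 : sdBeta S D b (j+1) 0 = D (sdBeta S D b j 0) := rfl
    have hbs : ∀ m, sdBeta S D b (j+1) (m+1) = S (sdBeta S D b j m) + D (sdBeta S D b j (m+1)) :=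
      fun m => rfl
    simp only [hb0, hbs, add_mul, Function.iterate_zero_apply]
    rw [Finset.sum_add_distrib]
    -- second sums: ∑_{k<j+1} D(β k) T^k x vs ∑_{m<j+1} D(β (m+1)) T^(m+1) x + D(β 0) x
    have hsecond : ∑ k ∈ Finset.range (j+1), D (sdBeta S D b j k) * (sdT S D a)^[k] x
        = ∑ m ∈ Finset.range (j+1), D (sdBeta S D b j (m+1)) * (sdT S D a)^[m+1] x
          + D (sdBeta S D b j 0) * x := by
      rw [Finset.sum_range_succ (fun m => D (sdBeta S D b j (m+1)) * (sdT S D a)^[m+1] x)]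
      rw [sdBeta_eq_zero S D b j (j+1) (Nat.lt_succ_self j), map_zero, zero_mul, add_zero]
      rw [Finset.sum_range_succ' (fun k => D (sdBeta S D b j k) * (sdT S D a)^[k] x)]
      simp
    rw [hsecond]
    abel

include hD in
/-- Right division of the operator `f(Tₐ)` by `Tₐ - b·`. -/
lemma sdDiv (b : K) : ∀ (n : ℕ) (c : ℕ → K), ∃ g : ℕ → K, ∃ r : K, g n = c (n + 1) ∧
    ∀ x, ∑ i ∈ Finset.range (n + 2), c i * (sdT S D a)^[i] x
      = (∑ j ∈ Finset.range (n + 1), g j * (sdT S D a)^[j] (sdT S D a x - b * x)) + r * x := by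
  intro n
  induction n with
  | zero =>
    intro c
    refine ⟨fun _ => c 1, c 0 + c 1 * b, rfl, fun x => ?_⟩
    have : sdT S D a x = (sdT S D a x - b * x) + b * x := by abel
    rw [Finset.sum_range_succ, Finset.sum_range_one, Finset.sum_range_one]
    rw [Function.iterate_one, Function.iterate_zero_apply, Function.iterate_zero_apply, this]
    rw [mul_add, add_mul, mul_assoc]
    abel
  | succ n ih =>
    intro c
    obtain ⟨g', r, hgtop, hg⟩ := ih (fun i => c i + c (n + 2) * sdBeta S D b (n + 1) i)
    refine ⟨fun j => if j = n + 1 then c (n + 2) else g' j, r, by simp, fun x => ?_⟩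
    have hsplit : (sdT S D a)^[n+2] x
        = (sdT S D a)^[n+1] (sdT S D a x - b * x) + (sdT S D a)^[n+1] (b * x) := by
      rw [Function.iterate_succ_apply, ← sdT_iter_add]
      congr 1
      abel
    calc ∑ i ∈ Finset.range (n + 3), c i * (sdT S D a)^[i] x
        = ∑ i ∈ Finset.range (n + 2), c i * (sdT S D a)^[i] x
          + c (n + 2) * (sdT S D a)^[n+2] x := Finset.sum_range_succ _ _
      _ = ∑ i ∈ Finset.range (n + 2),
            (c i + c (n + 2) * sdBeta S D b (n + 1) i) * (sdT S D a)^[i] x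
          + c (n + 2) * (sdT S D a)^[n+1] (sdT S D a x - b * x) := by
          rw [hsplit, sdBeta_spec S D a hD b (n+1) x, mul_add, Finset.mul_sum]
          simp only [add_mul, Finset.sum_add_distrib, mul_assoc]
          abel
      _ = (∑ j ∈ Finset.range (n + 1), g' j * (sdT S D a)^[j] (sdT S D a x - b * x)) + r * x
          + c (n + 2) * (sdT S D a)^[n+1] (sdT S D a x - b * x) := by rw [hg x]
      _ = (∑ j ∈ Finset.range (n + 2),
            (if j = n + 1 then c (n + 2) else g' j) * (sdT S D a)^[j] (sdT S D a x - b * x))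
          + r * x := by
          have hrhs : ∑ j ∈ Finset.range (n + 2),
              (if j = n + 1 then c (n + 2) else g' j) * (sdT S D a)^[j] (sdT S D a x - b * x)
              = (∑ j ∈ Finset.range (n + 1), g' j * (sdT S D a)^[j] (sdT S D a x - b * x))
                + c (n + 2) * (sdT S D a)^[n+1] (sdT S D a x - b * x) := by
            rw [Finset.sum_range_succ, if_pos rfl]
            congr 1
            exact Finset.sum_congr rfl fun j hj => by
              rw [if_neg (Finset.mem_range.mp hj).ne]
          rw [hrhs]
          abel

include hD in
lemma sdMain : ∀ (n : ℕ) (c : ℕ → K), (∃ i, i ≤ n ∧ c i ≠ 0) →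
    ∀ v : Fin (n + 1) → K,
      (∀ i, ∑ j ∈ Finset.range (n + 1), c j * (sdT S D a)^[j] (v i) = 0) →
      ∃ w : Fin (n + 1) → K, (∀ i, S (w i) * a + D (w i) = a * w i) ∧ (∃ i, w i ≠ 0)
        ∧ ∑ i, v i * w i = 0 := by
  intro n
  induction n with
  | zero =>
    intro c ⟨i, hi, hci⟩ v hv
    interval_cases i
    have h0 := hv 0
    rw [Finset.sum_range_one, Function.iterate_zero_apply] at h0
    have hv0 : v 0 = 0 := by
      rcases mul_eq_zero.mp h0 with h | h
      · exact absurd h hci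
      · exact h
    refine ⟨fun _ => 1, fun i => by simp [sdD_one S D hD], ⟨0, one_ne_zero⟩, ?_⟩
    rw [Fin.sum_univ_one, hv0, zero_mul]
  | succ n ih =>
    intro c hex v hv
    by_cases htop : c (n + 1) = 0
    ·
      obtain ⟨i, hi, hci⟩ := hex
      have hi' : i ≤ n := by
        rcases Nat.lt_or_ge i (n+1) with h | h
        · omega
        · exfalso; have : i = n + 1 := by omega
          exact hci (this ▸ htop)
      obtain ⟨w', hw'cent, hw'ne, hw'sum⟩ := ih c ⟨i, hi', hci⟩ (fun i => v i.succ) (fun i => by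
        have := hv i.succ
        rwa [Finset.sum_range_succ, htop, zero_mul, add_zero] at this)
      refine ⟨Fin.cases 0 w', ?_, ?_, ?_⟩
      · intro i
        induction i using Fin.cases with
        | zero => simp
        | succ i => simpa using hw'cent i
      · obtain ⟨i, hi⟩ := hw'ne
        exact ⟨i.succ, by simpa using hi⟩
      · rw [Fin.sum_univ_succ]
        simp only [Fin.cases_zero, Fin.cases_succ, mul_zero, zero_add]
        exact hw'sum
    · by_cases hv0 : v 0 = 0
      · refine ⟨fun i => if i = 0 then 1 else 0, ?_, ⟨0, by simp⟩, ?_⟩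
        · intro i
          by_cases h : i = 0 <;> simp [h, sdD_one S D hD]
        · rw [Fintype.sum_eq_single 0 (fun i hi => by simp [hi])]
          simp [hv0]
      · -- the main case
        set b : K := sdConj S D a (v 0) with hb
        have hbv0 : b * v 0 = sdT S D a (v 0) := by
          rw [hb, sdConj, sdT, add_mul, mul_assoc (S (v 0) * a), mul_assoc (D (v 0)),
            inv_mul_cancel₀ hv0, mul_one, mul_one]
        obtain ⟨g, r, hgtop, hg⟩ := sdDiv S D a hD b n c
        have hr : r = 0 := by
          have h0 := hg (v 0)
          rw [hv 0] at h0
          have hz : sdT S D a (v 0) - b * v 0 = 0 := by rw [hbv0, sub_self]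
          rw [hz] at h0
          simp only [sdT_iter_zero, mul_zero, Finset.sum_const_zero, zero_add] at h0
          rcases mul_eq_zero.mp h0.symm with h | h
          · exact h
          · exact absurd h hv0
        have hgker : ∀ i : Fin (n + 1),
            ∑ j ∈ Finset.range (n + 1),
              g j * (sdT S D a)^[j] (sdT S D a (v i.succ) - b * v i.succ) = 0 := by
          intro i
          have := hg (v i.succ)
          rw [hv i.succ, hr, zero_mul, add_zero] at this
          exact this.symm
        obtain ⟨w', hw'cent, hw'ne, hw'sum⟩ := ih g ⟨n, le_refl n, hgtop ▸ htop⟩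
          (fun i => sdT S D a (v i.succ) - b * v i.succ) hgker
        set z : K := ∑ i, v i.succ * w' i with hz
        have hpsi : sdT S D a z - b * z = 0 := by
          have hhom : ∀ (F : Fin (n+1) → K),
              sdT S D a (∑ i, F i) - b * ∑ i, F i = ∑ i, (sdT S D a (F i) - b * F i) := by
            intro F
            exact map_sum (AddMonoidHom.mk' (fun y => sdT S D a y - b * y)
              (fun p q => by
                show sdT S D a (p + q) - b * (p + q) = _
                rw [sdT_add S D a, mul_add]; abel)) F Finset.univ
          rw [hz, hhom]
          rw [Finset.sum_congr rfl (fun i _ => by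
            rw [sdT_mulright S D a hD (hw'cent i), ← mul_assoc, ← sub_mul])]
          exact hw'sum
        by_cases hzz : z = 0
        · refine ⟨Fin.cases 0 w', ?_, ?_, ?_⟩
          · intro i
            induction i using Fin.cases with
            | zero => simp
            | succ i => simpa using hw'cent i
          · obtain ⟨i, hi⟩ := hw'ne
            exact ⟨i.succ, by simpa using hi⟩
          · rw [Fin.sum_univ_succ]
            simp only [Fin.cases_zero, Fin.cases_succ, mul_zero, zero_add]
            exact hzz ▸ hz.symm
        · -- z ≠ 0 : c₀ := (v 0)⁻¹ * z is a nonzero centralizer element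
          have hvc0 : v 0 * ((v 0)⁻¹ * z) = z := by
            rw [← mul_assoc, mul_inv_cancel₀ hv0, one_mul]
          obtain ⟨c₀, hvc, hc₀ne⟩ : ∃ c : K, v 0 * c = z ∧ c ≠ 0 :=
            ⟨(v 0)⁻¹ * z, hvc0, fun h => hzz (by rw [← hvc0, h, mul_zero])⟩
          have hSv0 : S (v 0) ≠ 0 := fun h => by
            have : S (v 0) * S (v 0)⁻¹ = 0 := by rw [h, zero_mul]
            rw [← map_mul, mul_inv_cancel₀ hv0, map_one] at this
            exact one_ne_zero this
          have hkey : S c₀ * a + D c₀ = a * c₀ := by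
            have h1 : sdT S D a (v 0 * c₀) = b * (v 0 * c₀) := by
              rw [hvc]
              exact sub_eq_zero.mp hpsi
            rw [sdT_mulleft S D a hD, ← mul_assoc, hbv0] at h1
            simp only [sdT] at h1
            rw [add_mul, mul_assoc (S (v 0))] at h1
            exact mul_left_cancel₀ hSv0 (add_right_cancel h1)
          refine ⟨Fin.cases (-c₀) w', ?_, ⟨0, by simp [hc₀ne]⟩, ?_⟩
          · intro i
            induction i using Fin.cases with
            | zero =>
              simp only [Fin.cases_zero]
              rw [map_neg, map_neg, neg_mul, ← neg_add, hkey, ← mul_neg]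
            | succ i => simpa using hw'cent i
          · rw [Fin.sum_univ_succ]
            simp only [Fin.cases_zero, Fin.cases_succ]
            rw [← hz, mul_neg, hvc]
            exact neg_add_cancel z

end

/-- For a nonzero polynomial `f`, `E(f,a)` is a right `C(a)`-vector space of dimension at
most `deg f`: it is closed under addition and right multiplication by `C(a)`, and any
`deg f + 1` of its elements are right `C(a)`-linearly dependent. -/
theorem sdE_dim_le_deg {K : Type*} [DivisionRing K] (S : K →+* K) (D : K →+ K)
    (hD : ∀ a b : K, D (a * b) = S a * D b + D a * b)
    (f : ℕ →₀ K) (hf : f ≠ 0) (a : K) :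
    (∀ x ∈ sdE S D f a, ∀ y ∈ sdE S D f a, x + y ∈ sdE S D f a) ∧
    (∀ x ∈ sdE S D f a, ∀ c ∈ sdCentralizer S D a, x * c ∈ sdE S D f a) ∧
    (∀ v : Fin (f.support.sup id + 1) → K, (∀ i, v i ∈ sdE S D f a) →
      ∃ w : Fin (f.support.sup id + 1) → K,
        (∀ i, w i ∈ sdCentralizer S D a) ∧ (∃ i, w i ≠ 0) ∧ ∑ i, v i * w i = 0) := by
  refine ⟨?_, ?_, ?_⟩
  · intro x hx y hy
    rw [mem_sdE_iff S D a hD] at hx hy ⊢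
    rw [sdL_add, hx, hy, add_zero]
  · intro x hx c hc
    rw [mem_sdE_iff S D a hD] at hx ⊢
    rw [sdL_mulright S D a hD f ((sdCent_iff S D a c).mp hc), hx, zero_mul]
  · intro v hv
    have hsub : f.support ⊆ Finset.range (f.support.sup id + 1) := by
      intro i hi
      exact Finset.mem_range.mpr (Nat.lt_succ_of_le (Finset.le_sup (f := id) hi))
    have hLsum : ∀ x : K, sdL S D a f x
        = ∑ j ∈ Finset.range (f.support.sup id + 1), f j * (sdT S D a)^[j] x :=
      fun x => Finsupp.sum_of_support_subset f hsub _ (fun i _ => zero_mul _)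
    have hex : ∃ i, i ≤ f.support.sup id ∧ (f : ℕ → K) i ≠ 0 := by
      obtain ⟨i, hi⟩ := Finsupp.support_nonempty_iff.mpr hf
      exact ⟨i, Finset.le_sup (f := id) hi, Finsupp.mem_support_iff.mp hi⟩
    obtain ⟨w, hwc, hwne, hwsum⟩ := sdMain S D a hD (f.support.sup id) (f : ℕ → K) hex v (fun i => by
      have := (mem_sdE_iff S D a hD f (v i)).mp (hv i)
      rwa [hLsum] at this)
    exact ⟨w, fun i => (sdCent_iff S D a (w i)).mpr (hwc i), hwne, hwsum⟩
end

section
/- P-independence via iterated llcm: let K be a division ring with endomorphism S and S-derivation D, x₁,…,xₙ ∈ K, and pⱼ := the monic least left common multiple of t−x₁,…,t−xⱼ in K[t;S,D] (p₀ := 1). Then deg(pₙ) = n (i.e. {x₁,…,xₙ} is P-independent) if and only if pᵢ(x_{i+1}) ≠ 0 for every i ∈ {1,…,n−1} (including p₁(x₂) ≠ 0, etc., with the convention p₀(x₁)=1≠0). -/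
/-- `R` together with `ι : K →+* R` and `t : R` is the skew polynomial ring `K[t;S,D]`:
the commutation rule `t·a = S(a)t + D(a)` holds and every element of `R` is uniquely a
polynomial `Σ ι(cᵢ)·tⁱ`. -/
def IsSkewPolyRing {K R : Type*} [DivisionRing K] [Ring R] (S : K →+* K) (D : K →+ K)
    (ι : K →+* R) (t : R) : Prop :=
  (∀ a : K, t * ι a = ι (S a) * t + ι (D a)) ∧
  (∀ r : R, ∃! c : ℕ →₀ K, r = c.sum fun i k => ι k * t ^ i)

/-- The coefficients of `r ∈ K[t;S,D]`. -/
noncomputable def coeffs {K R : Type*} [DivisionRing K] [Ring R] {S : K →+* K} {D : K →+ K}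
    {ι : K →+* R} {t : R} (h : IsSkewPolyRing S D ι t) (r : R) : ℕ →₀ K :=
  (h.2 r).choose

/-- The degree of `r ∈ K[t;S,D]` (with `deg 0 = 0`). -/
noncomputable def sdeg {K R : Type*} [DivisionRing K] [Ring R] {S : K →+* K} {D : K →+ K}
    {ι : K →+* R} {t : R} (h : IsSkewPolyRing S D ι t) (r : R) : ℕ :=
  (coeffs h r).support.sup id

/-- `r ∈ K[t;S,D]` is monic: its leading coefficient is `1`. -/
noncomputable def SMonic {K R : Type*} [DivisionRing K] [Ring R] {S : K →+* K} {D : K →+ K}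
    {ι : K →+* R} {t : R} (h : IsSkewPolyRing S D ι t) (r : R) : Prop :=
  coeffs h r (sdeg h r) = 1

/-!
The left ideals satisfy `R pᵢ₊₁ = R pᵢ ∩ R(t − xᵢ₊₁)`. Write `a = xᵢ₊₁`. If `pᵢ ∈ R(t − a)`, then
`pᵢ₊₁ = pᵢ`. Otherwise `c := pᵢ(a) ≠ 0`, and the product formula `(t − a^c) c = S(c) (t − a)`
puts `(t − a^c) pᵢ` in `R pᵢ ∩ R(t − a) = R pᵢ₊₁`; as `pᵢ₊₁` is a proper left multiple of `pᵢ`,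
its degree is exactly `deg pᵢ + 1`. So `deg pₙ` is the number of `i < n` with `pᵢ(xᵢ₊₁) ≠ 0`.

In the noncommutative ring `R`, `Ideal.span {g}` is the left ideal `R g`.
-/

namespace IsSkewPolyRing

variable {K R : Type*} [DivisionRing K] [Ring R] {S : K →+* K} {D : K →+ K}
  {ι : K →+* R} {t : R} (h : IsSkewPolyRing S D ι t)

theorem eq_sum_coeffs (r : R) : r = (coeffs h r).sum fun i k => ι k * t ^ i :=
  (h.2 r).choose_spec.1

theorem coeffs_eq {r : R} {c : ℕ →₀ K} (hc : r = c.sum fun i k => ι k * t ^ i) :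
    coeffs h r = c :=
  ((h.2 r).choose_spec.2 c hc).symm

theorem coeffs_zero : coeffs h (0 : R) = 0 :=
  h.coeffs_eq (by simp)

theorem coeffs_add (r₁ r₂ : R) : coeffs h (r₁ + r₂) = coeffs h r₁ + coeffs h r₂ :=
  h.coeffs_eq <| by
    rw [Finsupp.sum_add_index' (by simp) (fun _ _ _ => by rw [map_add, add_mul]),
      ← h.eq_sum_coeffs, ← h.eq_sum_coeffs]

theorem coeffs_neg (r : R) : coeffs h (-r) = -coeffs h r :=
  eq_neg_of_add_eq_zero_left (by rw [← h.coeffs_add, neg_add_cancel, h.coeffs_zero])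

theorem coeffs_sub (r₁ r₂ : R) : coeffs h (r₁ - r₂) = coeffs h r₁ - coeffs h r₂ := by
  rw [sub_eq_add_neg, h.coeffs_add, h.coeffs_neg, sub_eq_add_neg]

theorem coeffs_monomial (k : K) (i : ℕ) : coeffs h (ι k * t ^ i) = Finsupp.single i k :=
  h.coeffs_eq (by simp)

theorem coeffs_iota_mul (k : K) (r : R) : coeffs h (ι k * r) = k • coeffs h r :=
  h.coeffs_eq <| by
    rw [Finsupp.sum_smul_index (by simp)]
    conv_lhs => rw [h.eq_sum_coeffs r]
    simp only [Finsupp.mul_sum, map_mul, mul_assoc]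

theorem eq_zero_of_coeffs_eq_zero {r : R} (hr : coeffs h r = 0) : r = 0 := by
  rw [h.eq_sum_coeffs r, hr, Finsupp.sum_zero_index]

def degLT (m : ℕ) : AddSubgroup R where
  carrier := {r | ∀ i, m ≤ i → coeffs h r i = 0}
  add_mem' ha hb i hi := by simp [h.coeffs_add, ha i hi, hb i hi]
  zero_mem' i _ := by simp [h.coeffs_zero]
  neg_mem' ha i hi := by simp [h.coeffs_neg, ha i hi]

theorem degLT_mono {m n : ℕ} (hmn : m ≤ n) : h.degLT m ≤ h.degLT n :=
  fun _ hr i hi => hr i (hmn.trans hi)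

theorem mem_degLT_zero {r : R} : r ∈ h.degLT 0 ↔ r = 0 := by
  refine ⟨fun hr => h.eq_zero_of_coeffs_eq_zero (Finsupp.ext fun i => hr i i.zero_le), ?_⟩
  rintro rfl
  exact zero_mem _

theorem monomial_mem_degLT (k : K) {i m : ℕ} (him : i < m) : ι k * t ^ i ∈ h.degLT m :=
  fun j hj => by rw [h.coeffs_monomial, Finsupp.single_eq_of_ne (by omega)]

theorem iota_mul_mem_degLT (k : K) {m : ℕ} {r : R} (hr : r ∈ h.degLT m) :
    ι k * r ∈ h.degLT m :=
  fun i hi => by rw [h.coeffs_iota_mul, Finsupp.smul_apply, hr i hi, smul_zero]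

theorem degLT_le_of_monomial_mem {m : ℕ} {G : AddSubgroup R}
    (hG : ∀ (k : K) (i : ℕ), i < m → ι k * t ^ i ∈ G) : h.degLT m ≤ G := by
  intro r hr
  rw [h.eq_sum_coeffs r]
  refine AddSubgroup.sum_mem _ fun i hi => hG _ i ?_
  by_contra! him
  exact Finsupp.mem_support_iff.1 hi (hr i him)

theorem t_mul_mem_degLT {m : ℕ} {r : R} (hr : r ∈ h.degLT m) : t * r ∈ h.degLT (m + 1) := by
  refine h.degLT_le_of_monomial_mem (G := (h.degLT (m + 1)).comap (AddMonoidHom.mulLeft t))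
    (fun k i him => ?_) hr
  have : t * (ι k * t ^ i) = ι (S k) * t ^ (i + 1) + ι (D k) * t ^ i := by
    rw [← mul_assoc, h.1, add_mul, mul_assoc, ← pow_succ']
  simp only [AddSubgroup.mem_comap, AddMonoidHom.coe_mulLeft, this]
  exact add_mem (h.monomial_mem_degLT _ (by omega)) (h.monomial_mem_degLT _ (by omega))

theorem t_pow_mul_mem_degLT {m : ℕ} {r : R} (hr : r ∈ h.degLT m) (i : ℕ) :
    t ^ i * r ∈ h.degLT (i + m) := by
  induction i with
  | zero => simpa using hr
  | succ i ih =>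
    rw [pow_succ', mul_assoc, Nat.succ_add]
    exact h.t_mul_mem_degLT ih

theorem mul_mem_degLT {m n : ℕ} {f g : R} (hf : f ∈ h.degLT m) (hg : g ∈ h.degLT (n + 1)) :
    f * g ∈ h.degLT (m + n) := by
  refine h.degLT_le_of_monomial_mem (G := (h.degLT (m + n)).comap (AddMonoidHom.mulRight g))
    (fun k i him => ?_) hf
  simp only [AddSubgroup.mem_comap, AddMonoidHom.coe_mulRight, mul_assoc]
  exact h.iota_mul_mem_degLT k (h.degLT_mono (by omega) (h.t_pow_mul_mem_degLT hg i))

theorem t_pow_mul_iota_sub_mem_degLT (m : ℕ) (b : K) :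
    t ^ m * ι b - ι (S^[m] b) * t ^ m ∈ h.degLT m := by
  induction m with
  | zero => simp [zero_mem]
  | succ m ih =>
    have : t ^ (m + 1) * ι b - ι (S^[m + 1] b) * t ^ (m + 1)
        = t * (t ^ m * ι b - ι (S^[m] b) * t ^ m) + ι (D (S^[m] b)) * t ^ m := by
      have hc := eq_sub_of_add_eq (h.1 (S^[m] b)).symm
      rw [Function.iterate_succ_apply', pow_succ', ← mul_assoc (ι _), hc]
      noncomm_ring
    rw [this]
    exact add_mem (h.t_mul_mem_degLT ih) (h.monomial_mem_degLT _ (by omega))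

theorem coeffs_eq_zero_of_sdeg_lt {r : R} {i : ℕ} (hi : sdeg h r < i) : coeffs h r i = 0 := by
  by_contra hne
  exact hi.not_ge (Finset.le_sup (f := id) (Finsupp.mem_support_iff.2 hne))

theorem le_sdeg_of_coeffs_ne_zero {r : R} {i : ℕ} (hi : coeffs h r i ≠ 0) : i ≤ sdeg h r :=
  Finset.le_sup (f := id) (Finsupp.mem_support_iff.2 hi)

theorem sdeg_le_of_mem_degLT {r : R} {m : ℕ} (hr : r ∈ h.degLT (m + 1)) : sdeg h r ≤ m :=
  Finset.sup_le fun i hi => by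
    by_contra! him
    exact Finsupp.mem_support_iff.1 hi (hr i him)

theorem coeffs_sdeg_ne_zero {r : R} (hr : r ≠ 0) : coeffs h r (sdeg h r) ≠ 0 := by
  have hsupp : (coeffs h r).support.Nonempty :=
    Finsupp.support_nonempty_iff.2 fun e => hr (h.eq_zero_of_coeffs_eq_zero e)
  obtain ⟨i, hi, he⟩ := Finset.exists_mem_eq_sup _ hsupp id
  rw [sdeg, he]
  exact Finsupp.mem_support_iff.1 hi

theorem sub_leading_mem_degLT (r : R) :
    r - ι (coeffs h r (sdeg h r)) * t ^ sdeg h r ∈ h.degLT (sdeg h r) := by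
  intro i hi
  rw [h.coeffs_sub, h.coeffs_monomial, Finsupp.sub_apply]
  rcases hi.eq_or_lt with rfl | hi
  · simp
  · rw [h.coeffs_eq_zero_of_sdeg_lt hi, Finsupp.single_eq_of_ne (by omega), sub_zero]

theorem mem_degLT_succ_of_sub_mem {r : R} {c : K} {m : ℕ} (hr : r - ι c * t ^ m ∈ h.degLT m) :
    r ∈ h.degLT (m + 1) := by
  simpa using add_mem (h.degLT_mono m.le_succ hr) (h.monomial_mem_degLT c m.lt_succ_self)

theorem coeffs_eq_of_sub_mem_degLT {r : R} {c : K} {m : ℕ} (hr : r - ι c * t ^ m ∈ h.degLT m) :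
    coeffs h r m = c := by
  have := hr m le_rfl
  rwa [h.coeffs_sub, h.coeffs_monomial, Finsupp.sub_apply, Finsupp.single_eq_same,
    sub_eq_zero] at this

theorem sdeg_eq_of_sub_mem_degLT {r : R} {c : K} {m : ℕ} (hc : c ≠ 0)
    (hr : r - ι c * t ^ m ∈ h.degLT m) : sdeg h r = m :=
  le_antisymm (h.sdeg_le_of_mem_degLT (h.mem_degLT_succ_of_sub_mem hr))
    (h.le_sdeg_of_coeffs_ne_zero (by rwa [h.coeffs_eq_of_sub_mem_degLT hr]))

theorem mul_sub_leading_mem_degLT (f g : R) :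
    f * g - ι (coeffs h f (sdeg h f) * S^[sdeg h f] (coeffs h g (sdeg h g))) *
      t ^ (sdeg h f + sdeg h g) ∈ h.degLT (sdeg h f + sdeg h g) := by
  set p := sdeg h f
  set q := sdeg h g
  set a := coeffs h f p
  set b := coeffs h g q
  have key : f * g - ι (a * S^[p] b) * t ^ (p + q) =
      (f - ι a * t ^ p) * g + ι a * (t ^ p * (g - ι b * t ^ q)) +
        ι a * ((t ^ p * ι b - ι (S^[p] b) * t ^ p) * t ^ q) := by
    simp only [map_mul, pow_add]
    noncomm_ring
  rw [key]
  refine add_mem (add_mem ?_ ?_) ?_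
  · exact h.mul_mem_degLT (h.sub_leading_mem_degLT f) (h.mem_degLT_succ_of_sub_mem
      (h.sub_leading_mem_degLT g))
  · exact h.iota_mul_mem_degLT a (h.t_pow_mul_mem_degLT (h.sub_leading_mem_degLT g) p)
  · refine h.iota_mul_mem_degLT a (h.mul_mem_degLT (h.t_pow_mul_iota_sub_mem_degLT p b) ?_)
    simpa using h.monomial_mem_degLT 1 q.lt_succ_self

theorem coeffs_sdeg_mul (f g : R) : coeffs h (f * g) (sdeg h f + sdeg h g) =
    coeffs h f (sdeg h f) * S^[sdeg h f] (coeffs h g (sdeg h g)) :=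
  h.coeffs_eq_of_sub_mem_degLT (h.mul_sub_leading_mem_degLT f g)

theorem coeffs_sdeg_mul_ne_zero {f g : R} (hf : f ≠ 0) (hg : g ≠ 0) :
    coeffs h f (sdeg h f) * S^[sdeg h f] (coeffs h g (sdeg h g)) ≠ 0 :=
  mul_ne_zero (h.coeffs_sdeg_ne_zero hf)
    (fun e => h.coeffs_sdeg_ne_zero hg ((S.injective.iterate _).eq_iff' (iterate_map_zero S _)
      |>.1 e))

theorem sdeg_mul {f g : R} (hf : f ≠ 0) (hg : g ≠ 0) :
    sdeg h (f * g) = sdeg h f + sdeg h g :=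
  h.sdeg_eq_of_sub_mem_degLT (h.coeffs_sdeg_mul_ne_zero hf hg) (h.mul_sub_leading_mem_degLT f g)

theorem noZeroDivisors (h : IsSkewPolyRing S D ι t) : NoZeroDivisors R where
  eq_zero_or_eq_zero_of_mul_eq_zero {f g} hfg := by
    by_contra! hne
    have := h.coeffs_sdeg_mul f g
    rw [hfg, h.coeffs_zero, Finsupp.coe_zero, Pi.zero_apply] at this
    exact h.coeffs_sdeg_mul_ne_zero hne.1 hne.2 this.symm

theorem sdeg_iota (k : K) : sdeg h (ι k) = 0 :=
  Nat.le_zero.1 <| h.sdeg_le_of_mem_degLT (by simpa using h.monomial_mem_degLT k one_pos)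

theorem sdeg_t_sub_iota (a : K) : sdeg h (t - ι a) = 1 := by
  refine h.sdeg_eq_of_sub_mem_degLT (c := 1) one_ne_zero ?_
  simpa using neg_mem (h.monomial_mem_degLT a one_pos)

theorem smonic_t_sub_iota (a : K) : SMonic h (t - ι a) := by
  rw [SMonic, h.sdeg_t_sub_iota]
  exact h.coeffs_eq_of_sub_mem_degLT (by simpa using neg_mem (h.monomial_mem_degLT a one_pos))

theorem eq_iota_of_sdeg_eq_zero {r : R} (hr : sdeg h r = 0) : r = ι (coeffs h r 0) := by
  have := h.sub_leading_mem_degLT r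
  rwa [hr, h.mem_degLT_zero, pow_zero, mul_one, sub_eq_zero] at this

theorem ne_zero_of_smonic {r : R} (hr : SMonic h r) : r ≠ 0 := by
  rintro rfl
  simp [SMonic, h.coeffs_zero] at hr

theorem sdeg_le_of_mem_span_singleton {f g : R} (hf : f ≠ 0) (hfg : f ∈ Ideal.span {g}) :
    sdeg h g ≤ sdeg h f := by
  have := h.noZeroDivisors
  obtain ⟨u, rfl⟩ := Ideal.mem_span_singleton'.1 hfg
  rw [h.sdeg_mul (left_ne_zero_of_mul hf) (right_ne_zero_of_mul hf)]
  omega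

theorem smonic_eq_of_mem_span_singleton {f g : R} (hf : SMonic h f) (hg : SMonic h g)
    (hfg : f ∈ Ideal.span {g}) (hdeg : sdeg h f ≤ sdeg h g) : f = g := by
  obtain ⟨u, rfl⟩ := Ideal.mem_span_singleton'.1 hfg
  have hu : u ≠ 0 := left_ne_zero_of_mul (h.ne_zero_of_smonic hf)
  have hdu : sdeg h u = 0 := by
    have := h.sdeg_mul hu (h.ne_zero_of_smonic hg)
    omega
  have hlc : coeffs h u 0 = 1 := by
    rw [SMonic, h.sdeg_mul hu (h.ne_zero_of_smonic hg), h.coeffs_sdeg_mul, hdu, hg] at hf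
    simpa using hf
  rw [h.eq_iota_of_sdeg_eq_zero hdu, hlc, map_one, one_mul]

theorem exists_t_pow_sub_iota_mem_span (h : IsSkewPolyRing S D ι t) (a : K) (m : ℕ) :
    ∃ c : K, t ^ m - ι c ∈ Ideal.span {t - ι a} := by
  induction m with
  | zero => exact ⟨1, by simp⟩
  | succ m ih =>
    obtain ⟨c, hc⟩ := ih
    refine ⟨S c * a + D c, ?_⟩
    have : t ^ (m + 1) - ι (S c * a + D c) = t * (t ^ m - ι c) + ι (S c) * (t - ι a) := by
      rw [pow_succ', map_add, map_mul, mul_sub, mul_sub, h.1]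
      noncomm_ring
    rw [this]
    exact add_mem (Ideal.mul_mem_left _ _ hc)
      (Ideal.mul_mem_left _ _ (Ideal.mem_span_singleton_self _))

theorem exists_sub_iota_mem_span (h : IsSkewPolyRing S D ι t) (a : K) (r : R) :
    ∃ c : K, r - ι c ∈ Ideal.span {t - ι a} := by
  choose N hN using h.exists_t_pow_sub_iota_mem_span a
  refine ⟨(coeffs h r).sum fun i k => k * N i, ?_⟩
  have : r - ι ((coeffs h r).sum fun i k => k * N i) =
      (coeffs h r).sum fun i k => ι k * (t ^ i - ι (N i)) := by
    simp only [Finsupp.sum, map_sum, map_mul, mul_sub, Finset.sum_sub_distrib]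
    exact congrArg (· - _) (h.eq_sum_coeffs r)
  rw [this]
  exact Submodule.sum_mem _ fun i _ => Ideal.mul_mem_left _ _ (hN i)

theorem t_sub_sdConj_mul_iota (h : IsSkewPolyRing S D ι t) {a c : K} (hc : c ≠ 0) :
    (t - ι (sdConj S D a c)) * ι c = ι (S c) * (t - ι a) := by
  have hac : sdConj S D a c * c = S c * a + D c := by
    simp [sdConj, add_mul, mul_assoc, inv_mul_cancel₀ hc]
  rw [sub_mul, h.1, ← map_mul, hac, map_add, map_mul, mul_sub]
  abel

theorem t_sub_sdConj_mul_mem_span (h : IsSkewPolyRing S D ι t) {a c : K} (hc : c ≠ 0) {r : R}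
    (hr : r - ι c ∈ Ideal.span {t - ι a}) :
    (t - ι (sdConj S D a c)) * r ∈ Ideal.span {t - ι a} := by
  have : (t - ι (sdConj S D a c)) * r =
      (t - ι (sdConj S D a c)) * (r - ι c) + ι (S c) * (t - ι a) := by
    rw [← h.t_sub_sdConj_mul_iota hc]
    noncomm_ring
  rw [this]
  exact add_mem (Ideal.mul_mem_left _ _ hr)
    (Ideal.mul_mem_left _ _ (Ideal.mem_span_singleton_self _))

theorem eq_of_span_eq_inf_of_mem {P P' : R} {a : K} (hP : SMonic h P) (hP' : SMonic h P')
    (hspan : Ideal.span {P'} = Ideal.span {P} ⊓ Ideal.span {t - ι a})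
    (hmem : P ∈ Ideal.span {t - ι a}) : P' = P := by
  rw [inf_eq_left.2 ((Ideal.span_singleton_le_iff_mem _).2 hmem)] at hspan
  refine h.smonic_eq_of_mem_span_singleton hP' hP (hspan ▸ Ideal.mem_span_singleton_self P') ?_
  exact h.sdeg_le_of_mem_span_singleton (h.ne_zero_of_smonic hP)
    (hspan ▸ Ideal.mem_span_singleton_self P)

theorem sdeg_eq_succ_of_span_eq_inf_of_not_mem {P P' : R} {a : K} (hP : SMonic h P)
    (hP' : SMonic h P') (hspan : Ideal.span {P'} = Ideal.span {P} ⊓ Ideal.span {t - ι a})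
    (hmem : P ∉ Ideal.span {t - ι a}) : sdeg h P' = sdeg h P + 1 := by
  have := h.noZeroDivisors
  have hP'mem : P' ∈ Ideal.span {P} ⊓ Ideal.span {t - ι a} :=
    hspan ▸ Ideal.mem_span_singleton_self P'
  have hle : sdeg h P ≤ sdeg h P' :=
    h.sdeg_le_of_mem_span_singleton (h.ne_zero_of_smonic hP') hP'mem.1
  have hne : sdeg h P' ≠ sdeg h P := fun e =>
    hmem (h.smonic_eq_of_mem_span_singleton hP' hP hP'mem.1 e.le ▸ hP'mem.2)
  obtain ⟨c, hc⟩ := h.exists_sub_iota_mem_span a P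
  have hc0 : c ≠ 0 := by
    rintro rfl
    exact hmem (by simpa using hc)
  have hmul : (t - ι (sdConj S D a c)) * P ∈ Ideal.span {P'} :=
    hspan ▸ ⟨Ideal.mul_mem_left _ _ (Ideal.mem_span_singleton_self P),
      h.t_sub_sdConj_mul_mem_span hc0 hc⟩
  have hP0 := h.ne_zero_of_smonic hP
  have htb0 := h.ne_zero_of_smonic (h.smonic_t_sub_iota (sdConj S D a c))
  have hge := h.sdeg_le_of_mem_span_singleton (mul_ne_zero htb0 hP0) hmul
  rw [h.sdeg_mul htb0 hP0, h.sdeg_t_sub_iota] at hge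
  omega

end IsSkewPolyRing

theorem iInf_fin_lt_succ {α : Type*} [CompleteLattice α] {n : ℕ} (f : Fin n → α) (k : Fin n) :
    ⨅ i : Fin n, ⨅ _ : (i : ℕ) < k + 1, f i = (⨅ i : Fin n, ⨅ _ : (i : ℕ) < k, f i) ⊓ f k := by
  simp only [Nat.lt_succ_iff_lt_or_eq, iInf_or, iInf_inf_eq, Fin.val_inj, iInf_iInf_eq_left]

theorem eq_self_iff_forall_not_of_step {n : ℕ} {d : ℕ → ℕ} {A : Fin n → Prop} (h0 : d 0 = 0)
    (hA : ∀ i : Fin n, A i → d (i + 1) = d i) (hnA : ∀ i : Fin n, ¬A i → d (i + 1) = d i + 1) :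
    d n = n ↔ ∀ i, ¬A i := by
  suffices ∀ j ≤ n, d j ≤ j ∧ (d j = j ↔ ∀ i : Fin n, (i : ℕ) < j → ¬A i) from
    (this n le_rfl).2.trans (by simp)
  intro j
  induction j with
  | zero => simp [h0]
  | succ j ih =>
    intro hj
    obtain ⟨hle, hiff⟩ := ih (by omega)
    let k : Fin n := ⟨j, hj⟩
    by_cases hk : A k
    · have hstep : d (j + 1) = d j := hA k hk
      exact ⟨by omega, fun e => by omega, fun hall => absurd hk (hall k j.lt_succ_self)⟩
    · have hstep : d (j + 1) = d j + 1 := hnA k hk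
      refine ⟨by omega, fun e i hi => ?_, fun hall => ?_⟩
      · rcases Nat.lt_succ_iff_lt_or_eq.1 hi with hi | hi
        · exact hiff.1 (by omega) i hi
        · rwa [show i = k from Fin.ext hi]
      · have := hiff.2 fun i hi => hall i (by omega)
        omega

/-- `x` is `0`-indexed (`x i` is `x_{i+1}`), and `pᵢ(x_{i+1}) ≠ 0` is stated as
`pᵢ ∉ R(t − x_{i+1})`. -/
theorem p_independent_iff_eval_ne_zero_general {K R : Type*} [DivisionRing K] [Ring R]
    (S : K →+* K) (D : K →+ K)
    (ι : K →+* R) (t : R) (h : IsSkewPolyRing S D ι t)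
    (n : ℕ) (x : Fin n → K) (p : ℕ → R)
    (hp0 : p 0 = 1)
    (hmonic : ∀ j ≤ n, SMonic h (p j))
    (hspan : ∀ j ≤ n, Ideal.span {p j} =
      ⨅ i : Fin n, ⨅ _ : (i : ℕ) < j, Ideal.span {t - ι (x i)}) :
    sdeg h (p n) = n ↔ ∀ i : Fin n, p i ∉ Ideal.span {t - ι (x i)} := by
  have hllcm (i : Fin n) :
      Ideal.span {p (i + 1)} = Ideal.span {p i} ⊓ Ideal.span {t - ι (x i)} := by
    rw [hspan _ i.isLt, hspan _ i.isLt.le, iInf_fin_lt_succ]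
  refine eq_self_iff_forall_not_of_step (d := fun j => sdeg h (p j))
    (by rw [hp0, ← map_one ι, h.sdeg_iota]) (fun i hi => ?_) (fun i hi => ?_)
  · rw [h.eq_of_span_eq_inf_of_mem (hmonic _ i.isLt.le) (hmonic _ i.isLt) (hllcm i) hi]
  · exact h.sdeg_eq_succ_of_span_eq_inf_of_not_mem (hmonic _ i.isLt.le) (hmonic _ i.isLt)
      (hllcm i) hi

/-- P-independence via iterated llcm: with `pⱼ` the monic llcm of `t−x₁,…,t−xⱼ`
(`p₀ = 1`), one has `deg pₙ = n` iff `pᵢ(x_{i+1}) ≠ 0` (i.e. `pᵢ ∉ R(t−x_{i+1})`) for all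
`0 ≤ i < n` (here `x` is `0`-indexed: `x i` is `x_{i+1}`). -/
theorem p_independent_iff_eval_ne_zero {K R : Type*} [DivisionRing K] [Ring R]
    (S : K →+* K) (D : K →+ K)
    (hD : ∀ a b : K, D (a * b) = S a * D b + D a * b)
    (ι : K →+* R) (t : R) (h : IsSkewPolyRing S D ι t)
    (n : ℕ) (x : Fin n → K) (p : ℕ → R)
    (hp0 : p 0 = 1)
    (hmonic : ∀ j ≤ n, SMonic h (p j))
    (hspan : ∀ j ≤ n, Ideal.span {p j} =
      ⨅ i : Fin n, ⨅ _ : (i : ℕ) < j, Ideal.span {t - ι (x i)}) :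
    sdeg h (p n) = n ↔ ∀ i : Fin n, p i ∉ Ideal.span {t - ι (x i)} :=
  p_independent_iff_eval_ne_zero_general S D ι t h n x p hp0 hmonic hspan
end
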